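/- Let C be an initial configuration of the game-LTS and suppose C ↠^t C'. Then t is a legal trace and, if C' has components A and κ, the names occurring in t are precisely those in A ∪ dom(κ). -/

import Mathlib

set_option linter.unusedVariables false
set_option linter.unnecessarySeqFocus false

namespace PCFv

/-- Concatenation of a list of lists. -/
def flat {β : Type _} : List (List β) → List β
  | [] => []
  | l :: ls => l ++ flat ls

/-! ## Types, constants and primitive operations of PCF_v -/

inductive Ty : Type
  | bool | int | unit
  | arrow (a b : Ty)
  | prod (Ts : List Ty)

inductive Const : Type
  | unit
  | bool (b : Bool)
  | int (n : Int)
  deriving DecidableEq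

def Const.ty : Const → Ty
  | .unit => .unit
  | .bool _ => .bool
  | .int _ => .int

inductive PrimOp : Type
  | add | sub | mul | le | neg | conj | disj | eqc
  deriving DecidableEq

def PrimOp.eval : PrimOp → List Const → Option Const
  | .add, [.int m, .int n] => some (.int (m + n))
  | .sub, [.int m, .int n] => some (.int (m - n))
  | .mul, [.int m, .int n] => some (.int (m * n))
  | .le,  [.int m, .int n] => some (.bool (decide (m ≤ n)))
  | .neg, [.bool b] => some (.bool (!b))
  | .conj, [.bool a, .bool b] => some (.bool (a && b))
  | .disj, [.bool a, .bool b] => some (.bool (a || b))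
  | .eqc, [c1, c2] => some (.bool (decide (c1 = c2)))
  | _, _ => none

inductive PrimTy : PrimOp → List Ty → Ty → Prop
  | add : PrimTy .add [.int, .int] .int
  | sub : PrimTy .sub [.int, .int] .int
  | mul : PrimTy .mul [.int, .int] .int
  | le : PrimTy .le [.int, .int] .bool
  | neg : PrimTy .neg [.bool] .bool
  | conj : PrimTy .conj [.bool, .bool] .bool
  | disj : PrimTy .disj [.bool, .bool] .bool
  | eqc {T : Ty} (h : T = .int ∨ T = .bool ∨ T = .unit) : PrimTy .eqc [T, T] .bool

/-! ## Expressions (with abstract function names, used by the LTSs) -/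

/-- Expressions in de Bruijn representation.  `fixfun T1 T2 b` is the recursive
function `λ^f x. b` (variable 0 is `x`, variable 1 is `f`); `aname a j T` is an
abstract (opponent-generated) function name `α_T^j`; `letTup n e b` is the
tuple-deconstructing let `let (x_1,…,x_n) = e in b` (variables `0..n-1`). -/
inductive Expr : Type
  | var (n : Nat)
  | aname (a j : Nat) (T : Ty)
  | const (c : Const)
  | fixfun (T1 T2 : Ty) (body : Expr)
  | tuple (es : List Expr)
  | prim (op : PrimOp) (es : List Expr)
  | app (e1 e2 : Expr)
  | ite (b e1 e2 : Expr)
  | letTup (n : Nat) (e body : Expr)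

instance : Inhabited Expr := ⟨.const .unit⟩

/-- Simultaneous substitution of the closed values `vs` for the variables
`d, …, d + vs.length - 1` (under `d` binders). -/
def Expr.inst (vs : List Expr) : Nat → Expr → Expr
  | d, .var n =>
      if n < d then .var n
      else
        match vs[n - d]? with
        | some v => v
        | none => .var (n - vs.length)
  | _, .aname a j T => .aname a j T
  | _, .const c => .const c
  | d, .fixfun T1 T2 b => .fixfun T1 T2 (Expr.inst vs (d + 2) b)
  | d, .tuple es => .tuple (es.attach.map fun x => Expr.inst vs d x.1)
  | d, .prim op es => .prim op (es.attach.map fun x => Expr.inst vs d x.1)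
  | d, .app e1 e2 => .app (Expr.inst vs d e1) (Expr.inst vs d e2)
  | d, .ite b e1 e2 => .ite (Expr.inst vs d b) (Expr.inst vs d e1) (Expr.inst vs d e2)
  | d, .letTup n e b => .letTup n (Expr.inst vs d e) (Expr.inst vs (d + n) b)
termination_by d e => sizeOf e
decreasing_by all_goals (simp_wf <;> first
  | omega
  | (have := List.sizeOf_lt_of_mem x.2; omega))

/-- Abstract function names occurring in an expression. -/
def Expr.anames : Expr → List Nat
  | .var _ => []
  | .aname a _ _ => [a]
  | .const _ => []
  | .fixfun _ _ b => b.anames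
  | .tuple es => flat (es.attach.map fun x => x.1.anames)
  | .prim _ es => flat (es.attach.map fun x => x.1.anames)
  | .app e1 e2 => e1.anames ++ e2.anames
  | .ite b e1 e2 => b.anames ++ e1.anames ++ e2.anames
  | .letTup _ e b => e.anames ++ b.anames
termination_by e => sizeOf e
decreasing_by all_goals (simp_wf <;> first
  | omega
  | (have := List.sizeOf_lt_of_mem x.2; omega))

inductive IsValue : Expr → Prop
  | const (c : Const) : IsValue (.const c)
  | aname (a j : Nat) (T : Ty) : IsValue (.aname a j T)
  | fixfun (T1 T2 : Ty) (b : Expr) : IsValue (.fixfun T1 T2 b)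
  | tuple {es : List Expr} (h : ∀ e ∈ es, IsValue e) : IsValue (.tuple es)

/-! ## Typing -/

/-- Typing judgement, parameterised by whether abstract function names are
allowed.  `Typed := TypedA false` is the typing judgement of pure PCF_v,
`TypedN := TypedA true` additionally types abstract function names. -/
inductive TypedA (allow : Bool) : List Ty → Expr → Ty → Prop
  | var {Γ n T} (h : Γ[n]? = some T) : TypedA allow Γ (.var n) T
  | aname {Γ a j T1 T2} (hallow : allow = true) :
      TypedA allow Γ (.aname a j (.arrow T1 T2)) (.arrow T1 T2)
  | const {Γ c} : TypedA allow Γ (.const c) c.ty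
  | fixfun {Γ T1 T2 b} (h : TypedA allow (T1 :: .arrow T1 T2 :: Γ) b T2) :
      TypedA allow Γ (.fixfun T1 T2 b) (.arrow T1 T2)
  | tuple {Γ} {es : List Expr} {Ts : List Ty} (hlen : es.length = Ts.length)
      (h : ∀ (i : Nat) (e : Expr) (T : Ty), es[i]? = some e → Ts[i]? = some T → TypedA allow Γ e T) :
      TypedA allow Γ (.tuple es) (.prod Ts)
  | prim {Γ op T} {es : List Expr} {Ts : List Ty} (hty : PrimTy op Ts T) (hlen : es.length = Ts.length)
      (h : ∀ (i : Nat) (e : Expr) (T' : Ty), es[i]? = some e → Ts[i]? = some T' → TypedA allow Γ e T') :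
      TypedA allow Γ (.prim op es) T
  | app {Γ e1 e2 T1 T2} (h1 : TypedA allow Γ e1 (.arrow T1 T2))
      (h2 : TypedA allow Γ e2 T1) : TypedA allow Γ (.app e1 e2) T2
  | ite {Γ b e1 e2 T} (hb : TypedA allow Γ b .bool) (h1 : TypedA allow Γ e1 T)
      (h2 : TypedA allow Γ e2 T) : TypedA allow Γ (.ite b e1 e2) T
  | letTup {Γ e b Ts T} (he : TypedA allow Γ e (.prod Ts))
      (hb : TypedA allow (Ts ++ Γ) b T) : TypedA allow Γ (.letTup Ts.length e b) T

abbrev Typed := TypedA false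
abbrev TypedN := TypedA true

/-! ## Reduction semantics -/

inductive BStep : Expr → Expr → Prop
  | beta {T1 T2 b v} (hv : IsValue v) :
      BStep (.app (.fixfun T1 T2 b) v) (Expr.inst [v, .fixfun T1 T2 b] 0 b)
  | prim {op : PrimOp} {cs : List Const} {c : Const} (h : op.eval cs = some c) :
      BStep (.prim op (cs.map Expr.const)) (.const c)
  | letTup {n vs b} (hv : ∀ v ∈ vs, IsValue v) (hlen : vs.length = n) :
      BStep (.letTup n (.tuple vs) b) (Expr.inst vs 0 b)
  | iteT {e1 e2} : BStep (.ite (.const (.bool true)) e1 e2) e1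
  | iteF {e1 e2} : BStep (.ite (.const (.bool false)) e1 e2) e2

/-- Single-hole evaluation contexts, with typed holes. -/
inductive ECtx : Type
  | hole (T : Ty)
  | tupleC (vs : List Expr) (E : ECtx) (es : List Expr)
  | primC (op : PrimOp) (vs : List Expr) (E : ECtx) (es : List Expr)
  | appL (E : ECtx) (e : Expr)
  | appR (v : Expr) (E : ECtx)
  | iteC (E : ECtx) (e1 e2 : Expr)
  | letC (n : Nat) (E : ECtx) (b : Expr)

def ECtx.plug : ECtx → Expr → Expr
  | .hole _, e => e
  | .tupleC vs E es, e => .tuple (vs ++ E.plug e :: es)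
  | .primC op vs E es, e => .prim op (vs ++ E.plug e :: es)
  | .appL E e2, e => .app (E.plug e) e2
  | .appR v E, e => .app v (E.plug e)
  | .iteC E e1 e2, e => .ite (E.plug e) e1 e2
  | .letC n E b, e => .letTup n (E.plug e) b

def ECtx.holeTy : ECtx → Ty
  | .hole T => T
  | .tupleC _ E _ => E.holeTy
  | .primC _ _ E _ => E.holeTy
  | .appL E _ => E.holeTy
  | .appR _ E => E.holeTy
  | .iteC E _ _ => E.holeTy
  | .letC _ E _ => E.holeTy

/-- Well-formedness of evaluation contexts: everything to the left of the hole
is a value. -/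
inductive ECtx.Wf : ECtx → Prop
  | hole (T) : ECtx.Wf (.hole T)
  | tupleC {vs E es} (h : ∀ v ∈ vs, IsValue v) (hE : ECtx.Wf E) :
      ECtx.Wf (.tupleC vs E es)
  | primC {op vs E es} (h : ∀ v ∈ vs, IsValue v) (hE : ECtx.Wf E) :
      ECtx.Wf (.primC op vs E es)
  | appL {E e} (hE : ECtx.Wf E) : ECtx.Wf (.appL E e)
  | appR {v E} (hv : IsValue v) (hE : ECtx.Wf E) : ECtx.Wf (.appR v E)
  | iteC {E e1 e2} (hE : ECtx.Wf E) : ECtx.Wf (.iteC E e1 e2)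
  | letC {n E b} (hE : ECtx.Wf E) : ECtx.Wf (.letC n E b)

/-- Small-step reduction `e → e'`. -/
inductive Red : Expr → Expr → Prop
  | mk {E a b} (hwf : ECtx.Wf E) (h : BStep a b) : Red (E.plug a) (E.plug b)

/-- `e ⇓`: `e` reduces to a value. -/
def Terminates (e : Expr) : Prop := ∃ v, IsValue v ∧ Relation.ReflTransGen Red e v

/-! ## Contexts and contextual equivalence -/

/-- Multi-holed contexts `D` (with indexed, typed holes). -/
inductive Ctx : Type
  | hole (i : Nat) (T : Ty)
  | var (n : Nat)
  | const (c : Const)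
  | fixfun (T1 T2 : Ty) (D : Ctx)
  | tuple (Ds : List Ctx)
  | prim (op : PrimOp) (Ds : List Ctx)
  | app (D1 D2 : Ctx)
  | ite (D1 D2 D3 : Ctx)
  | letTup (n : Nat) (D1 D2 : Ctx)

/-- `D[e]`: fill every hole of `D` with the (closed) expression `e`. -/
def Ctx.fill : Ctx → Expr → Expr
  | .hole _ _, e => e
  | .var n, _ => .var n
  | .const c, _ => .const c
  | .fixfun T1 T2 D, e => .fixfun T1 T2 (D.fill e)
  | .tuple Ds, e => .tuple (Ds.attach.map fun x => x.1.fill e)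
  | .prim op Ds, e => .prim op (Ds.attach.map fun x => x.1.fill e)
  | .app D1 D2, e => .app (D1.fill e) (D2.fill e)
  | .ite D1 D2 D3, e => .ite (D1.fill e) (D2.fill e) (D3.fill e)
  | .letTup n D1 D2, e => .letTup n (D1.fill e) (D2.fill e)
termination_by D _ => sizeOf D
decreasing_by all_goals (simp_wf <;> first
  | omega
  | (have := List.sizeOf_lt_of_mem x.2; omega))

/-- Contextual equivalence `e1 ≅ e2` for closed expressions. -/
def CtxEquiv (e1 e2 : Expr) : Prop :=
  ∀ D : Ctx, Typed [] (D.fill e1) .unit → Typed [] (D.fill e2) .unit →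
    (Terminates (D.fill e1) ↔ Terminates (D.fill e2))

/-! ## Applicative contexts -/

/-- The diverging expression `⊥_Unit`. -/
def botUnit : Expr := .app (.fixfun .unit .unit (.app (.var 1) (.var 0))) (.const .unit)

/-- Applicative contexts `E_a ::= [·]_T | E_a v | if E_a = c then () else ⊥ | π_i(E_a)`. -/
inductive ACtx : Type
  | hole (T : Ty)
  | app (E : ACtx) (v : Expr)
  | iteEq (E : ACtx) (c : Const)
  | proj (n i : Nat) (E : ACtx)

def ACtx.fill : ACtx → Expr → Expr
  | .hole _, e => e
  | .app E v, e => .app (E.fill e) v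
  | .iteEq E c, e => .ite (.prim .eqc [E.fill e, .const c]) (.const .unit) botUnit
  | .proj n i E, e => .letTup n (E.fill e) (.var i)

/-- Well-formedness of applicative contexts: the arguments are values. -/
inductive ACtx.Wf : ACtx → Prop
  | hole (T) : ACtx.Wf (.hole T)
  | app {E v} (hv : IsValue v) (hE : ACtx.Wf E) : ACtx.Wf (.app E v)
  | iteEq {E c} (hE : ACtx.Wf E) : ACtx.Wf (.iteEq E c)
  | proj {n i E} (hE : ACtx.Wf E) : ACtx.Wf (.proj n i E)

/-! ## The plain LTS (Figure 2) -/

/-- Abstract values: values in which every function is an abstract name.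
These are the values `D[α̅]` supplied by the opponent. -/
inductive AVal : Type
  | const (c : Const)
  | name (a : Nat) (T : Ty)
  | tuple (vs : List AVal)

instance : Inhabited AVal := ⟨.const .unit⟩

def AVal.names : AVal → List Nat
  | .const _ => []
  | .name a _ => [a]
  | .tuple vs => flat (vs.attach.map fun x => x.1.names)
termination_by v => sizeOf v
decreasing_by all_goals (simp_wf <;> first
  | omega
  | (have := List.sizeOf_lt_of_mem x.2; omega))

/-- `v.toExpr j`: the expression `D[α̅^j]` denoted by an abstract value,
annotating every abstract name with the index `j`. -/
def AVal.toExpr (j : Nat) : AVal → Expr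
  | .const c => .const c
  | .name a T => .aname a j T
  | .tuple vs => .tuple (vs.attach.map fun x => x.1.toExpr j)
termination_by v => sizeOf v
decreasing_by all_goals (simp_wf <;> first
  | omega
  | (have := List.sizeOf_lt_of_mem x.2; omega))

/-- Typing of abstract values (names must be of function type). -/
inductive AValTy : AVal → Ty → Prop
  | const (c : Const) : AValTy (.const c) c.ty
  | name (a : Nat) (T1 T2 : Ty) : AValTy (.name a (.arrow T1 T2)) (.arrow T1 T2)
  | tuple {vs : List AVal} {Ts : List Ty} (hlen : vs.length = Ts.length)
      (h : ∀ (i : Nat) (v : AVal) (T : Ty), vs[i]? = some v → Ts[i]? = some T → AValTy v T) :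
      AValTy (.tuple vs) (.prod Ts)

/-- Function-free value contexts `D` with indexed, typed holes (ultimate patterns). -/
inductive VCtx : Type
  | const (c : Const)
  | hole (i : Nat) (T : Ty)
  | tuple (Ds : List VCtx)

instance : Inhabited VCtx := ⟨.const .unit⟩

/-! ### Ultimate pattern decomposition of proponent values -/

mutual
/-- Decompose a value into an ultimate pattern and the list of its functions;
the `Nat` argument/result threads the next fresh hole index. -/
def ulpAux : Expr → Nat → Option (VCtx × List Expr × Nat)
  | .const c, n => some (.const c, [], n)
  | .fixfun T1 T2 b, n => some (.hole n (.arrow T1 T2), [.fixfun T1 T2 b], n + 1)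
  | .aname a j T, n => some (.hole n T, [.aname a j T], n + 1)
  | .tuple es, n =>
      match ulpList es n with
      | some (Ds, fs, n') => some (.tuple Ds, fs, n')
      | none => none
  | _, _ => none

def ulpList : List Expr → Nat → Option (List VCtx × List Expr × Nat)
  | [], n => some ([], [], n)
  | e :: es, n =>
      match ulpAux e n with
      | some (D, fs, n') =>
          match ulpList es n' with
          | some (Ds, fs', n'') => some (D :: Ds, fs ++ fs', n'')
          | none => none
      | none => none
end

/-- `ulp v = some (D, v̅)` is the ultimate pattern decomposition of the value `v`. -/
def ulp (v : Expr) : Option (VCtx × List Expr) :=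
  match ulpAux v 0 with
  | some (D, fs, _) => some (D, fs)
  | none => none

/-! ### Moves, traces and memories -/

/-- Moves of the plain LTS: proponent calls `α̅(D)`, proponent returns
`ret(D)`, opponent calls `i(v)` and opponent returns `ret(v)`. -/
inductive Move : Type
  | pcall (a : Nat) (T : Ty) (D : VCtx)
  | pret (D : VCtx)
  | ocall (i : Nat) (v : AVal)
  | oret (v : AVal)

instance : Inhabited Move := ⟨.pret (.const .unit)⟩

abbrev Trace := List Move

def Move.isP : Move → Bool
  | .pcall .. => true
  | .pret _ => true
  | _ => false

/-- Abstract names introduced by a move (opponent moves introduce names). -/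
def Move.intros : Move → List Nat
  | .ocall _ v => v.names
  | .oret v => v.names
  | _ => []

def traceIntros (t : Trace) : List Nat := flat (t.map Move.intros)

/-- The moves extending the proponent-ending trace `t` in `M`. -/
def nextMoves (M : Set Trace) (t : Trace) : Set Move := {η | t ++ [η] ∈ M}

def EndsP (t : Trace) : Prop := ∃ t' m, t = t' ++ [m] ∧ m.isP = true

/-- Legality of a memory `M`: any proponent-ending trace has at most one
extension in `M`, and each abstract name is introduced at most once in `M`. -/
def LegalM (M : Set Trace) : Prop :=
  (∀ t, EndsP t → ∀ η₁ η₂, η₁ ∈ nextMoves M t → η₂ ∈ nextMoves M t → η₁ = η₂) ∧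
  (∀ a t₁ t₂, t₁ ∈ M → t₂ ∈ M → a ∈ traceIntros t₁ → a ∈ traceIntros t₂ →
      t₁ <+: t₂ ∨ t₂ <+: t₁) ∧
  (∀ a t, t ∈ M → (t.countP fun m => decide (a ∈ m.intros)) ≤ 1)

def MNames (M : Set Trace) : Set Nat := {a | ∃ t ∈ M, a ∈ traceIntros t}

/-! ### Configurations -/

/-- The component `A`: a partial map from pairs (abstract name, index) to the
proponent knowledge available when the name was used. -/
abbrev AMap := Nat → Nat → Option (List Expr)

def AMap.empty : AMap := fun _ _ => none

def AMap.upd (A : AMap) (ns : List Nat) (j : Nat) (k : List Expr) : AMap :=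
  fun a j' => if a ∈ ns ∧ j' = j then some k else A a j'

def AMap.names (A : AMap) : Set Nat := {a | ∃ j, (A a j).isSome}

/-- Configurations of the plain LTS: proponent `⟨A; M; K; t; e; V⟩` and
opponent `⟨A; M; K; t; V; u̅⟩`. -/
inductive Conf : Type
  | prop (A : AMap) (M : Set Trace) (K : List (Trace × ECtx)) (t : Trace)
      (e : Expr) (V : List (List Expr))
  | opp (A : AMap) (M : Set Trace) (K : List (Trace × ECtx)) (t : Trace)
      (V : List (List Expr)) (u : List Expr)

def Conf.Mset : Conf → Set Trace
  | .prop _ M _ _ _ _ => M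
  | .opp _ M _ _ _ _ => M

def Conf.Amap : Conf → AMap
  | .prop A _ _ _ _ _ => A
  | .opp A _ _ _ _ _ => A

def Conf.tr : Conf → Trace
  | .prop _ _ _ t _ _ => t
  | .opp _ _ _ t _ _ => t

/-- The abstract names of a configuration. -/
def Conf.names (C : Conf) : Set Nat :=
  AMap.names C.Amap ∪ MNames C.Mset ∪ {a | a ∈ traceIntros C.tr}

def Conf.Initial : Conf → Prop := fun C => ∃ e, C = .prop AMap.empty ∅ [] [] e []

def Conf.Final : Conf → Prop := fun C => ∃ A M t V u, C = .opp A M [] t V u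

/-- The initial configuration `C_e` of a closed expression. -/
def initConf (e : Expr) : Conf := .prop AMap.empty ∅ [] [] e []

/-! ### Transitions -/

inductive Lab : Type
  | tau
  | mv (η : Move)

inductive Step : Conf → Lab → Conf → Prop
  | propTau {A M K t e e' V} (h : Red e e') :
      Step (.prop A M K t e V) .tau (.prop A M K t e' V)
  | propRetBarb {A M t v V D vs} (hv : IsValue v) (hulp : ulp v = some (D, vs)) :
      Step (.prop A M [] t v V) (.mv (.pret D)) (.opp A M [] [] [] vs)
  | propRet {A M K t v u V D vs} (hv : IsValue v) (hulp : ulp v = some (D, vs))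
      (hK : K ≠ []) :
      Step (.prop A M K t v (u :: V)) .tau
        (.opp A (insert (t ++ [.pret D]) M) K (t ++ [.pret D]) V (u ++ vs))
  | propCall {A M K t E a j T1 T2 v V D vs u}
      (hv : IsValue v) (hulp : ulp v = some (D, vs))
      (hwf : ECtx.Wf E) (hT : E.holeTy = T2) (hA : A a j = some u) :
      Step (.prop A M K t (E.plug (.app (.aname a j (.arrow T1 T2)) v)) V) .tau
        (.opp A (insert [Move.pcall a (.arrow T1 T2) D] M)
          ((t, E) :: K) [Move.pcall a (.arrow T1 T2) D] V (u ++ vs))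
  | opRet {A M K t₀ E t V u w T' j}
      (hnext : nextMoves M t ⊆ {Move.oret w})
      (hty : AValTy w T') (hT : E.holeTy = T') (hnodup : w.names.Nodup)
      (hj : ∀ a ∈ w.names, A a j = none)
      (hleg : LegalM (insert (t ++ [Move.oret w]) M)) :
      Step (.opp A M ((t₀, E) :: K) t V u) .tau
        (.prop (A.upd w.names j u) (insert (t ++ [Move.oret w]) M) K t₀
          (E.plug (w.toExpr j)) V)
  | opCallBarb {A M u i vi w T1 T2}
      (hi : u[i]? = some vi) (hty : TypedN [] vi (.arrow T1 T2))
      (hw : AValTy w T1) (hnodup : w.names.Nodup)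
      (hfresh : ∀ a ∈ w.names, (∀ j, A a j = none) ∧ a ∉ MNames M) :
      Step (.opp A M [] [] [] u) (.mv (.ocall i w))
        (.prop (A.upd w.names 0 []) M [] [] (.app vi (w.toExpr 0)) [])
  | opCall {A M K t V u i vi w T1 T2 j}
      (hK : K ≠ [])
      (hnext : nextMoves M t ⊆ {Move.ocall i w})
      (hi : u[i]? = some vi) (hty : TypedN [] vi (.arrow T1 T2))
      (hw : AValTy w T1) (hnodup : w.names.Nodup)
      (hj : ∀ a ∈ w.names, A a j = none)
      (hleg : LegalM (insert (t ++ [Move.ocall i w]) M)) :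
      Step (.opp A M K t V u) .tau
        (.prop (A.upd w.names j u) (insert (t ++ [Move.ocall i w]) M) K
          (t ++ [Move.ocall i w]) (.app vi (w.toExpr j)) (u :: V))

/-- `C ⤇ C'`: reflexive-transitive closure of τ-transitions. -/
def Taus : Conf → Conf → Prop := Relation.ReflTransGen (fun C C' => Step C .tau C')

/-- `C ⤇^η C'`. -/
def WStep (C : Conf) (η : Move) (C' : Conf) : Prop :=
  ∃ C₁ C₂, Taus C C₁ ∧ Step C₁ (.mv η) C₂ ∧ Taus C₂ C'

/-- `C ⤇^{η₁ η₂} C'`. -/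
def WStep2 (C : Conf) (η₁ η₂ : Move) (C' : Conf) : Prop :=
  ∃ C₁, WStep C η₁ C₁ ∧ WStep C₁ η₂ C'

/-- `C ⤇^t C'` for a trace `t` of visible moves. -/
inductive WTrace : Conf → Trace → Conf → Prop
  | nil {C C'} (h : Taus C C') : WTrace C [] C'
  | cons {C C₁ C' η t} (h : WStep C η C₁) (ht : WTrace C₁ t C') : WTrace C (η :: t) C'

/-- The semantics `⟦e⟧` of a closed expression. -/
def Sem (e : Expr) : Set (Trace × Set Trace) :=
  {p | ∃ A t' V v, WTrace (initConf e) p.1 (.opp A p.2 [] t' V v)}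

/-! ### Weak (bi-)simulation -/

def IsWeakSim (R : Conf → Conf → Prop) : Prop :=
  ∀ C1 C2, R C1 C2 →
    (C1.Initial → ∀ D' C1', WStep C1 (.pret D') C1' →
        ∃ C2', WStep C2 (.pret D') C2' ∧ R C1' C2') ∧
    (C1.Final → ∀ i w D' C1', (∀ a ∈ AVal.names w, a ∉ C2.names) →
        WStep2 C1 (.ocall i w) (.pret D') C1' →
        ∃ C2', WStep2 C2 (.ocall i w) (.pret D') C2' ∧ R C1' C2') ∧
    C2.Mset ⊆ C1.Mset

/-- Weak bisimilarity of configurations. -/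
def Bisim (C1 C2 : Conf) : Prop :=
  ∃ R : Conf → Conf → Prop,
    IsWeakSim R ∧ IsWeakSim (fun a b => R b a) ∧ R C1 C2

/-- `e1 ≈ e2`: bisimilarity of closed expressions. -/
def ExprBisim (e1 e2 : Expr) : Prop := Bisim (initConf e1) (initConf e2)

/-! ## The game-LTS (Figure 3) -/

/-- Moves of the game-LTS: proponent calls `α̅(D)[β̅]`, proponent returns
`ret(D)[β̅]`, opponent calls `β̅(D)[α̅]`, opponent returns `ret(D)[α̅]`.
Opponent names `α` and proponent names `β` are taken from two (disjoint)
copies of `ℕ`. -/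
inductive GMove : Type
  | pcall (a : Nat) (D : VCtx) (bs : List Nat)
  | pret (D : VCtx) (bs : List Nat)
  | ocall (b : Nat) (D : VCtx) (as : List Nat)
  | oret (D : VCtx) (as : List Nat)

instance : Inhabited GMove := ⟨.pret (.const .unit) []⟩

abbrev GTrace := List GMove

def GMove.isP : GMove → Bool
  | .pcall .. => true
  | .pret .. => true
  | _ => false

def GMove.isO (m : GMove) : Bool := !m.isP

def GMove.isCall : GMove → Bool
  | .pcall .. => true
  | .ocall .. => true
  | _ => false

/-- Names introduced by a move. -/
def GMove.intro : GMove → List Nat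
  | .pcall _ _ bs => bs
  | .pret _ bs => bs
  | .ocall _ _ as => as
  | .oret _ as => as

def GMove.introO (m : GMove) : List Nat := if m.isP then [] else m.intro
def GMove.introP (m : GMove) : List Nat := if m.isP then m.intro else []

/-- Proponent names occurring in a move. -/
def GMove.pns : GMove → List Nat
  | .pcall _ _ bs => bs
  | .pret _ bs => bs
  | .ocall b _ _ => [b]
  | .oret _ _ => []

/-- Opponent names occurring in a move. -/
def GMove.ons : GMove → List Nat
  | .pcall a _ _ => [a]
  | .pret _ _ => []
  | .ocall _ _ as => as
  | .oret _ as => as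

def GTrace.pns (t : GTrace) : List Nat := flat (t.map GMove.pns)
def GTrace.ons (t : GTrace) : List Nat := flat (t.map GMove.ons)

/-! ### Complete traces, legal traces -/

mutual
/-- The grammar `CT_OP`. -/
inductive CTOP : GTrace → Prop
  | nil : CTOP []
  | cons {b D as t1 D' bs t2} (h1 : CTPO t1) (h2 : CTOP t2) :
      CTOP (.ocall b D as :: t1 ++ .pret D' bs :: t2)

/-- The grammar `CT_PO`. -/
inductive CTPO : GTrace → Prop
  | nil : CTPO []
  | cons {a D bs t1 D' as t2} (h1 : CTOP t1) (h2 : CTPO t2) :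
      CTPO (.pcall a D bs :: t1 ++ .oret D' as :: t2)
end

/-- Complete traces of shape `CT_P`. -/
def CTP (t : GTrace) : Prop := ∃ D bs t', t = .pret D bs :: t' ∧ CTOP t'

/-- Complete traces of shape `CT_O`. -/
def CTO (t : GTrace) : Prop := ∃ D as t', t = .oret D as :: t' ∧ CTPO t'

/-- Complete traces. -/
def CompleteCT (t : GTrace) : Prop := CTP t ∨ CTO t

/-- Traces: prefixes of complete traces. -/
def IsGTrace (t : GTrace) : Prop := ∃ t', t <+: t' ∧ CompleteCT t'

/-- The name conditions for legality of traces. -/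
def LegalConds (t : GTrace) : Prop :=
  ∀ t₁ m t₂, t = t₁ ++ m :: t₂ →
    m.intro.Nodup ∧
    match m with
    | .pcall a _ bs => (∀ b ∈ bs, b ∉ GTrace.pns t₁) ∧ ∃ m' ∈ t₁, a ∈ GMove.introO m'
    | .pret _ bs => ∀ b ∈ bs, b ∉ GTrace.pns t₁
    | .ocall b _ as => (∀ a ∈ as, a ∉ GTrace.ons t₁) ∧ ∃ m' ∈ t₁, b ∈ GMove.introP m'
    | .oret _ as => ∀ a ∈ as, a ∉ GTrace.ons t₁

/-- Legal traces. -/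
def GLegal (t : GTrace) : Prop := IsGTrace t ∧ LegalConds t

/-! ### Justifiers and views -/

/-- Index of the move of `t` introducing the opponent name `a`. -/
def introIdxO (t : GTrace) (a : Nat) : Option Nat :=
  (List.range t.length).find? fun j => decide (a ∈ GMove.introO t[j]!)

/-- Index of the move of `t` introducing the proponent name `b`. -/
def introIdxP (t : GTrace) (b : Nat) : Option Nat :=
  (List.range t.length).find? fun j => decide (b ∈ GMove.introP t[j]!)

/-- The stack of indices of currently open (unanswered) calls of `t`. -/
def pendingAux : List GMove → Nat → List Nat → List Nat
  | [], _, st => st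
  | m :: rest, k, st =>
      pendingAux rest (k + 1) (if m.isCall then k :: st else st.tail)

def pending (t : GTrace) : List Nat := pendingAux t 0 []

/-- The justifier of the move at index `k` of `t`: for calls, the move
introducing the called name; for returns, the open call being answered. -/
def justifier (t : GTrace) (k : Nat) : Option Nat :=
  match t[k]? with
  | some (.pcall a _ _) => introIdxO (t.take k) a
  | some (.ocall b _ _) => introIdxP (t.take k) b
  | some (.pret _ _) => (pending (t.take k)).head?
  | some (.oret _ _) => (pending (t.take k)).head?
  | none => none

/-- The P-view `⌈t⌉`. -/
def pview (t : GTrace) : GTrace :=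
  if h : t.length ≤ 1 then t
  else
    if (t[t.length - 1]!).isP then pview (t.take (t.length - 1)) ++ [t[t.length - 1]!]
    else
      match justifier t (t.length - 1) with
      | some j =>
          pview (t.take (min j (t.length - 1))) ++
            [t[min j (t.length - 1)]!, t[t.length - 1]!]
      | none => [t[t.length - 1]!]
termination_by t.length
decreasing_by all_goals (simp [List.length_take]; omega)

/-- The O-view `⌊t⌋`. -/
def oview (t : GTrace) : GTrace :=
  if h : t.length ≤ 1 then t
  else
    if (t[t.length - 1]!).isO then oview (t.take (t.length - 1)) ++ [t[t.length - 1]!]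
    else
      match justifier t (t.length - 1) with
      | some j =>
          oview (t.take (min j (t.length - 1))) ++
            [t[min j (t.length - 1)]!, t[t.length - 1]!]
      | none => [t[t.length - 1]!]
termination_by t.length
decreasing_by all_goals (simp [List.length_take]; omega)

/-! ### Name permutations -/

/-- Finite-support name permutations respecting O/P-ownership of names. -/
structure NPerm : Type where
  pO : Equiv.Perm ℕ
  pP : Equiv.Perm ℕ
  finO : Set.Finite {a | pO a ≠ a}
  finP : Set.Finite {b | pP b ≠ b}

def NPerm.actM (π : NPerm) : GMove → GMove
  | .pcall a D bs => .pcall (π.pO a) D (bs.map π.pP)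
  | .pret D bs => .pret D (bs.map π.pP)
  | .ocall b D as => .ocall (π.pP b) D (as.map π.pO)
  | .oret D as => .oret D (as.map π.pO)

def NPerm.actT (π : NPerm) (t : GTrace) : GTrace := t.map π.actM

/-- `t ∼ t'`: equality of traces up to name permutation. -/
def GEquiv (t t' : GTrace) : Prop := ∃ π : NPerm, t' = π.actT t

/-! ### Plays -/

/-- Visibility: the justifier of each move lies in the relevant view of the
preceding trace. -/
def Visibility (t : GTrace) : Prop :=
  ∀ k, k < t.length → ∀ j, justifier t k = some j →
    ((t[k]!).isP → t[j]! ∈ pview (t.take k)) ∧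
    ((t[k]!).isO → t[j]! ∈ oview (t.take k))

/-- Innocence: same-player moves following view-equivalent prefixes are
equivalent extensions. -/
def Innocence (t : GTrace) : Prop :=
  ∀ t₁ t₂ m₁ m₂, t₁ ++ [m₁] <+: t → t₂ ++ [m₂] <+: t →
    ((m₁.isP → m₂.isP → GEquiv (pview t₁) (pview t₂) →
        GEquiv (pview (t₁ ++ [m₁])) (pview (t₂ ++ [m₂]))) ∧
     (m₁.isO → m₂.isO → GEquiv (oview t₁) (oview t₂) →
        GEquiv (oview (t₁ ++ [m₁])) (oview (t₂ ++ [m₂]))))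

/-- Plays: legal traces satisfying visibility and innocence. -/
def Play (t : GTrace) : Prop := GLegal t ∧ Visibility t ∧ Innocence t

/-- `PVs(t)`: P-views of prefixes of `t`, up to permutation. -/
def PVs (t : GTrace) : Set GTrace :=
  {s | ∃ (t' : GTrace) (π : NPerm), t' <+: t ∧ s = π.actT (pview t')}

/-- `OVs(t)`: O-views of prefixes of `t`, up to permutation. -/
def OVs (t : GTrace) : Set GTrace :=
  {s | ∃ (t' : GTrace) (π : NPerm), t' <+: t ∧ s = π.actT (oview t')}

/-! ### Top-level moves and top-linearity -/

/-- The top-level moves (indices) of a P-starting play. -/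
inductive TopLevelIdx (t : GTrace) : Nat → Prop
  | init (h0 : 0 < t.length) (h : ∃ D bs, t[0]! = GMove.pret D bs) : TopLevelIdx t 0
  | ocall {k j : Nat} (hk : k < t.length) (h : ∃ b D as, t[k]! = GMove.ocall b D as)
      (hj : justifier t k = some j) (htl : TopLevelIdx t j) : TopLevelIdx t k
  | pret {k j : Nat} (hk : k < t.length) (h : ∃ D bs, t[k]! = GMove.pret D bs)
      (h0 : 0 < k) (hj : justifier t k = some j) (htl : TopLevelIdx t j) :
      TopLevelIdx t k

/-- Top-linearity: every top-level O-move is justified by the immediately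
preceding P-move. -/
def TopLinear (t : GTrace) : Prop :=
  ∀ k, k < t.length → TopLevelIdx t k → (∃ b D as, t[k]! = GMove.ocall b D as) →
    justifier t k = some (k - 1)

/-! ### Game configurations and transitions -/

/-- `A`: map from opponent names to the proponent names available at their
introduction. -/
abbrev OMap := Nat → Option (List Nat)

def OMap.empty : OMap := fun _ => none

def OMap.upd (A : OMap) (ns : List Nat) (k : List Nat) : OMap :=
  fun a => if a ∈ ns then some k else A a

/-- `κ`: concretion map from proponent names to values decorated with the
opponent names available to them. -/
abbrev PMap := Nat → Option (Expr × List Nat)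

def PMap.empty : PMap := fun _ => none

def PMap.upd (κ : PMap) (bs : List Nat) (vs : List Expr) (as : List Nat) : PMap :=
  fun b =>
    match (bs.zip vs).lookup b with
    | some v => some (v, as)
    | none => κ b

/-- Game configurations: proponent `⟨A; κ; K; t; e; V⟩[α̅]` and opponent
`⟨A; κ; K; t; V; β̅⟩`. -/
inductive GConf : Type
  | prop (A : OMap) (κ : PMap) (K : List (ECtx × List Nat)) (t : GTrace)
      (e : Expr) (V : List (List Nat)) (as : List Nat)
  | opp (A : OMap) (κ : PMap) (K : List (ECtx × List Nat)) (t : GTrace)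
      (V : List (List Nat)) (bs : List Nat)

def GConf.Amap : GConf → OMap
  | .prop A _ _ _ _ _ _ => A
  | .opp A _ _ _ _ _ => A

def GConf.kmap : GConf → PMap
  | .prop _ κ _ _ _ _ _ => κ
  | .opp _ κ _ _ _ _ => κ

def GConf.exprOf : GConf → Option Expr
  | .prop _ _ _ _ e _ _ => some e
  | .opp _ _ _ _ _ _ => none

/-- `(D, α̅) ∈ ulpatt(T)`: `D` is a function-free value context whose holes,
filled in order with the distinct names `α̅` at the holes' (function) types,
yield a value of type `T`. -/
def VCtx.holeTys : VCtx → List Ty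
  | .const _ => []
  | .hole _ T => [T]
  | .tuple Ds => flat (Ds.attach.map fun x => x.1.holeTys)
termination_by D => sizeOf D
decreasing_by all_goals (simp_wf <;> first
  | omega
  | (have := List.sizeOf_lt_of_mem x.2; omega))

inductive VCtxTy : VCtx → Ty → Prop
  | const (c : Const) : VCtxTy (.const c) c.ty
  | hole (i : Nat) {T1 T2 : Ty} : VCtxTy (.hole i (.arrow T1 T2)) (.arrow T1 T2)
  | tuple {Ds : List VCtx} {Ts : List Ty} (hlen : Ds.length = Ts.length)
      (h : ∀ (i : Nat) (D : VCtx) (T : Ty), Ds[i]? = some D → Ts[i]? = some T →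
        VCtxTy D T) : VCtxTy (.tuple Ds) (.prod Ts)

def UlpT (T : Ty) (D : VCtx) (ns : List Nat) : Prop :=
  VCtxTy D T ∧ ns.length = D.holeTys.length ∧ ns.Nodup

mutual
/-- Fill the holes of `D`, in order, with the names `ns` (at index `j`);
returns the expression together with the unused names. -/
def VCtx.fillAux (j : Nat) : VCtx → List Nat → Expr × List Nat
  | .const c, ns => (.const c, ns)
  | .hole _ T, [] => (.const .unit, [])
  | .hole _ T, n :: ns => (.aname n j T, ns)
  | .tuple Ds, ns =>
      match fillList j Ds ns with
      | (es, ns') => (.tuple es, ns')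

def fillList (j : Nat) : List VCtx → List Nat → List Expr × List Nat
  | [], ns => ([], ns)
  | D :: Ds, ns =>
      match VCtx.fillAux j D ns with
      | (e, ns') =>
          match fillList j Ds ns' with
          | (es, ns'') => (e :: es, ns'')
end

/-- `D[α̅]` as an expression (with name index `j`, by default `0`). -/
def VCtx.fill (D : VCtx) (ns : List Nat) (j : Nat := 0) : Expr :=
  (VCtx.fillAux j D ns).1

/-- The function `next_O(t)` imposing innocence on opponent moves. -/
def GNextO (t : GTrace) : Set GMove :=
  {m | ∃ (π : NPerm) (t' : GTrace) (o : GMove), t' ++ [o] <+: t ∧ o.isO = true ∧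
    oview t = NPerm.actT π (oview t') ∧ m = π.actM o ∧ Play (t ++ [m])}

/-- `next_O(t) ⊆⋆ [m]`. -/
def NextOStar (t : GTrace) (m : GMove) : Prop := m ∈ GNextO t ∨ GNextO t = ∅

inductive GLab : Type
  | tau
  | mv (m : GMove)

inductive GStep : GConf → GLab → GConf → Prop
  | propTau {A κ K t e e' V as} (h : Red e e') :
      GStep (.prop A κ K t e V as) .tau (.prop A κ K t e' V as)
  | propRet {A κ K t v V as bs' D vs bs}
      (hv : IsValue v) (hulp : ulp v = some (D, vs))
      (hlen : bs.length = vs.length) (hnodup : bs.Nodup)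
      (hfresh : ∀ b ∈ bs, κ b = none) :
      GStep (.prop A κ K t v (bs' :: V) as) (.mv (.pret D bs))
        (.opp A (κ.upd bs vs as) K (t ++ [GMove.pret D bs]) V (bs' ++ bs))
  | propApp {A κ K t E a T1 T2 v V as bs' D vs bs}
      (hv : IsValue v) (hulp : ulp v = some (D, vs))
      (hwf : ECtx.Wf E) (hT : E.holeTy = T2)
      (hA : A a = some bs')
      (hlen : bs.length = vs.length) (hnodup : bs.Nodup)
      (hfresh : ∀ b ∈ bs, κ b = none) :
      GStep (.prop A κ K t (E.plug (.app (.aname a 0 (.arrow T1 T2)) v)) V as)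
        (.mv (.pcall a D bs))
        (.opp A (κ.upd bs vs as) ((E, as) :: K) (t ++ [GMove.pcall a D bs]) V
          (bs' ++ bs))
  | opRet {A κ K E as' t V bs T' D as₂}
      (hnext : NextOStar t (.oret D as₂))
      (hU : UlpT T' D as₂) (hT : E.holeTy = T')
      (hfresh : ∀ a ∈ as₂, A a = none) :
      GStep (.opp A κ ((E, as') :: K) t V bs) (.mv (.oret D as₂))
        (.prop (A.upd as₂ bs) κ K (t ++ [GMove.oret D as₂])
          (E.plug (D.fill as₂)) V (as' ++ as₂))
  | opApp {A κ K t V bs b v as' T1 T2 D as₂}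
      (hnext : NextOStar t (.ocall b D as₂))
      (hmem : b ∈ bs) (hκ : κ b = some (v, as'))
      (hty : TypedN [] v (.arrow T1 T2))
      (hU : UlpT T1 D as₂)
      (hfresh : ∀ a ∈ as₂, A a = none) :
      GStep (.opp A κ K t V bs) (.mv (.ocall b D as₂))
        (.prop (A.upd as₂ bs) κ K (t ++ [GMove.ocall b D as₂])
          (.app v (D.fill as₂)) (bs :: V) (as' ++ as₂))

/-- The P-initial configuration `C_e`. -/
def GInitP (e : Expr) : GConf := .prop OMap.empty PMap.empty [] [] e [[]] []

/-- The O-initial configuration `C_E`. -/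
def GInitO (E : ECtx) : GConf := .opp OMap.empty PMap.empty [(E, [])] [] [] []

def GConf.IsInitial (C : GConf) : Prop := (∃ e, C = GInitP e) ∨ ∃ E, C = GInitO E

def GConf.PFinal (C : GConf) : Prop :=
  ∃ A κ t as, C = .prop A κ [] t (.const .unit) [] as

def GConf.OFinal (C : GConf) : Prop := ∃ A κ t bs, C = .opp A κ [] t [] bs

/-- `C ↠^t C'`: multi-step transition whose move labels concatenate to `t`. -/
inductive GMulti : GConf → GTrace → GConf → Prop
  | refl {C} : GMulti C [] C
  | tau {C C₁ t C'} (h : GStep C .tau C₁) (ht : GMulti C₁ t C') : GMulti C t C'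
  | mv {C C₁ m t C'} (h : GStep C (.mv m) C₁) (ht : GMulti C₁ t C') :
      GMulti C (m :: t) C'

/-- The traces produced by the game-LTS from `C`. -/
def GTr (C : GConf) : Set GTrace := {t | ∃ C', GMulti C t C'}

/-- `CP(C)`: the complete plays produced by the game-LTS from `C`. -/
def CP (C : GConf) : Set GTrace := {t | t ∈ GTr C ∧ CompleteCT t}

/-- `CP⁺(C)` for O-initial `C`. -/
def CPplus (C : GConf) : Set GTrace :=
  {s | ∃ t C', GMulti C t C' ∧ C'.PFinal ∧ s = t ++ [GMove.pret (.const .unit) []]}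

/-- `OVs(C)`. -/
def OVsC (C : GConf) : Set (Set GTrace) := {S | ∃ t ∈ CP C, S = OVs t}

/-- `OVTL(C)`. -/
def OVTL (C : GConf) : Set (Set GTrace) :=
  {S | ∃ t ∈ CP C, TopLinear t ∧ S = OVs t}

/-! ### Name permutation action on configurations -/

def NPerm.actE (π : NPerm) : Expr → Expr
  | .var n => .var n
  | .aname a j T => .aname (π.pO a) j T
  | .const c => .const c
  | .fixfun T1 T2 b => .fixfun T1 T2 (π.actE b)
  | .tuple es => .tuple (es.attach.map fun x => π.actE x.1)
  | .prim op es => .prim op (es.attach.map fun x => π.actE x.1)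
  | .app e1 e2 => .app (π.actE e1) (π.actE e2)
  | .ite b e1 e2 => .ite (π.actE b) (π.actE e1) (π.actE e2)
  | .letTup n e b => .letTup n (π.actE e) (π.actE b)
termination_by e => sizeOf e
decreasing_by all_goals (simp_wf <;> first
  | omega
  | (have := List.sizeOf_lt_of_mem x.2; omega))

def NPerm.actEC (π : NPerm) : ECtx → ECtx
  | .hole T => .hole T
  | .tupleC vs E es => .tupleC (vs.map π.actE) (π.actEC E) (es.map π.actE)
  | .primC op vs E es => .primC op (vs.map π.actE) (π.actEC E) (es.map π.actE)
  | .appL E e => .appL (π.actEC E) (π.actE e)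
  | .appR v E => .appR (π.actE v) (π.actEC E)
  | .iteC E e1 e2 => .iteC (π.actEC E) (π.actE e1) (π.actE e2)
  | .letC n E b => .letC n (π.actEC E) (π.actE b)

def NPerm.actOMap (π : NPerm) (A : OMap) : OMap :=
  fun a => (A (π.pO.symm a)).map fun bs => bs.map π.pP

def NPerm.actPMap (π : NPerm) (κ : PMap) : PMap :=
  fun b => (κ (π.pP.symm b)).map fun p => (π.actE p.1, p.2.map π.pO)

def NPerm.actK (π : NPerm) (K : List (ECtx × List Nat)) : List (ECtx × List Nat) :=
  K.map fun p => (π.actEC p.1, p.2.map π.pO)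

def NPerm.actConf (π : NPerm) : GConf → GConf
  | .prop A κ K t e V as =>
      .prop (π.actOMap A) (π.actPMap κ) (π.actK K) (π.actT t) (π.actE e)
        (V.map fun u => u.map π.pP) (as.map π.pO)
  | .opp A κ K t V bs =>
      .opp (π.actOMap A) (π.actPMap κ) (π.actK K) (π.actT t)
        (V.map fun u => u.map π.pP) (bs.map π.pP)

/-! ### Duality and composition -/

/-- Partial bijections between opponent and proponent names. -/
structure PBij : Type where
  f : Nat → Option Nat
  g : Nat → Option Nat
  fg : ∀ a b, f a = some b ↔ g b = some a

def PBij.apF (φ : PBij) (a : Nat) : Nat := (φ.f a).getD 0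
def PBij.apG (φ : PBij) (b : Nat) : Nat := (φ.g b).getD 0

/-- The dual of a move with respect to `φ`. -/
def PBij.dualM (φ : PBij) : GMove → GMove
  | .pcall a D bs => .ocall (φ.apF a) D (bs.map φ.apG)
  | .pret D bs => .oret D (bs.map φ.apG)
  | .ocall b D as => .pcall (φ.apG b) D (as.map φ.apF)
  | .oret D as => .pret D (as.map φ.apF)

/-- The dual trace `t̄^φ`. -/
def PBij.dualT (φ : PBij) (t : GTrace) : GTrace := t.map φ.dualM

/-- All names of `t` lie in `dom(φ) ∪ rng(φ)`. -/
def PBij.DefinedOn (φ : PBij) (t : GTrace) : Prop :=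
  (∀ a ∈ GTrace.ons t, (φ.f a).isSome) ∧ ∀ b ∈ GTrace.pns t, (φ.g b).isSome

/-! ## The extended game-LTS (initialisation moves) -/

/-- Extended moves: initialisation moves `?(D)[α̅]` together with game moves. -/
inductive EMove : Type
  | init (D : VCtx) (as : List Nat)
  | g (m : GMove)

instance : Inhabited EMove := ⟨.g default⟩

abbrev ETrace := List EMove

/-- Translation of extended moves to game moves (used to transport the
justification structure: the initialisation move introduces `α̅`). -/
def EMove.toG : EMove → GMove
  | .init D as => .oret D as
  | .g m => m

def ETrace.toG (t : ETrace) : GTrace := t.map EMove.toG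

def EMove.isP (m : EMove) : Bool := m.toG.isP
def EMove.isO (m : EMove) : Bool := !m.isP

/-- Extended complete traces `?(D)[α̅]·CT_P`. -/
def ECompleteT (t : ETrace) : Prop :=
  ∃ D as rest, t = EMove.init D as :: rest.map EMove.g ∧ CTP rest

/-- Justifiers in extended traces: the second move is justified by the
initialisation move. -/
def ejustifier (t : ETrace) (k : Nat) : Option Nat :=
  match k, t[1]? with
  | 1, some (EMove.g (GMove.pret _ _)) => some 0
  | k, _ => justifier (ETrace.toG t) k

/-- The P-view of an extended trace. -/
def epview (t : ETrace) : ETrace :=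
  if h : t.length ≤ 1 then t
  else
    if (t[t.length - 1]!).isP then epview (t.take (t.length - 1)) ++ [t[t.length - 1]!]
    else
      match ejustifier t (t.length - 1) with
      | some j =>
          epview (t.take (min j (t.length - 1))) ++
            [t[min j (t.length - 1)]!, t[t.length - 1]!]
      | none => [t[t.length - 1]!]
termination_by t.length
decreasing_by all_goals (simp [List.length_take]; omega)

/-- The O-view of an extended trace. -/
def eoview (t : ETrace) : ETrace :=
  if h : t.length ≤ 1 then t
  else
    if (t[t.length - 1]!).isO then eoview (t.take (t.length - 1)) ++ [t[t.length - 1]!]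
    else
      match ejustifier t (t.length - 1) with
      | some j =>
          eoview (t.take (min j (t.length - 1))) ++
            [t[min j (t.length - 1)]!, t[t.length - 1]!]
      | none => [t[t.length - 1]!]
termination_by t.length
decreasing_by all_goals (simp [List.length_take]; omega)

/-- Legality of extended traces. -/
def ELegal (t : ETrace) : Prop :=
  (∃ t', t <+: t' ∧ ECompleteT t') ∧ LegalConds (ETrace.toG t)

def EVisibility (t : ETrace) : Prop :=
  ∀ k, k < t.length → ∀ j, ejustifier t k = some j →
    ((t[k]!).isP → t[j]! ∈ epview (t.take k)) ∧
    ((t[k]!).isO → t[j]! ∈ eoview (t.take k))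

def NPerm.actEM (π : NPerm) : EMove → EMove
  | .init D as => .init D (as.map π.pO)
  | .g m => .g (π.actM m)

def NPerm.actET (π : NPerm) (t : ETrace) : ETrace := t.map π.actEM

/-- Equality of extended traces up to name permutation. -/
def EEquiv (t t' : ETrace) : Prop := ∃ π : NPerm, t' = π.actET t

def EInnocence (t : ETrace) : Prop :=
  ∀ t₁ t₂ m₁ m₂, t₁ ++ [m₁] <+: t → t₂ ++ [m₂] <+: t →
    ((m₁.isP → m₂.isP → EEquiv (epview t₁) (epview t₂) →
        EEquiv (epview (t₁ ++ [m₁])) (epview (t₂ ++ [m₂]))) ∧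
     (m₁.isO → m₂.isO → EEquiv (eoview t₁) (eoview t₂) →
        EEquiv (eoview (t₁ ++ [m₁])) (eoview (t₂ ++ [m₂]))))

/-- Extended plays. -/
def EPlay (t : ETrace) : Prop := ELegal t ∧ EVisibility t ∧ EInnocence t

/-- Extended configurations: `⟨Δ ⊢ e : T⟩` or a game configuration. -/
inductive EConf : Type
  | start (Γ : List Ty) (e : Expr) (T : Ty)
  | run (C : GConf)

/-- The extended transition relation (rule Init plus the game-LTS moves). -/
inductive EStep : EConf → EMove → EConf → Prop
  | init {Γ e T Ds as} (hU : UlpT (.prod Γ) (.tuple Ds) as) :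
      EStep (.start Γ e T) (.init (.tuple Ds) as)
        (.run (.prop (OMap.upd OMap.empty as []) PMap.empty [] []
          (Expr.inst (fillList 0 Ds as).1 0 e) [[]] as))
  | step {C m C'} (h : GStep C (.mv m) C') : EStep (.run C) (.g m) (.run C')

inductive EMulti : EConf → ETrace → EConf → Prop
  | refl {C} : EMulti C [] C
  | tau {C C₁ t C'} (h : GStep C .tau C₁) (ht : EMulti (.run C₁) t C') :
      EMulti (.run C) t C'
  | mv {C C₁ m t C'} (h : EStep C m C₁) (ht : EMulti C₁ t C') : EMulti C (m :: t) C'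

/-- `CEP(Δ ⊢ e : T)`: complete extended plays produced from `⟨Δ ⊢ e : T⟩`. -/
def CEP (Γ : List Ty) (e : Expr) (T : Ty) : Set ETrace :=
  {t | ECompleteT t ∧ ∃ C', EMulti (.start Γ e T) t C'}

/-- `EPVs(Δ ⊢ e : T)`: even-length P-views of prefixes of complete extended
plays of `e`. -/
def EPVs (Γ : List Ty) (e : Expr) (T : Ty) : Set ETrace :=
  {s | ∃ t ∈ CEP Γ e T, ∃ t', t' <+: t ∧ t'.length % 2 = 0 ∧ s = epview t'}

/-! ### Viewfunctions -/

/-- Viewfunctions: sets of extended plays that are P-views, even-prefix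
closed, closed under name permutations, and deterministic. -/
structure IsViewFn (F : Set ETrace) : Prop where
  plays : ∀ t ∈ F, EPlay t
  views : ∀ t ∈ F, epview t = t
  prefixClosed : ∀ t ∈ F, ∀ t', t' <+: t → t'.length % 2 = 0 → t' ∈ F
  permClosed : ∀ t ∈ F, ∀ π : NPerm, π.actET t ∈ F
  det : ∀ t m₁ m₂, t ++ [m₁] ∈ F → t ++ [m₂] ∈ F → EEquiv (t ++ [m₁]) (t ++ [m₂])
  initDet : ∀ m₁ t₁ m₂ t₂, (m₁ :: t₁) ∈ F → (m₂ :: t₂) ∈ F →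
    ∃ π : NPerm, m₂ = π.actEM m₁

/-- The typing `T̄ ⊢ F : T` of a viewfunction. -/
def VFTy (Ts : List Ty) (F : Set ETrace) (T : Ty) : Prop :=
  F = ∅ ∨ ∃ D0 as0 D1 bs1, [EMove.init D0 as0, EMove.g (.pret D1 bs1)] ∈ F ∧
    UlpT (.prod Ts) D0 as0 ∧ UlpT T D1 bs1

/-- The orbit `[t]` of an extended trace under name permutations. -/
def EOrbit (t : ETrace) : Set ETrace := {s | ∃ π : NPerm, s = π.actET t}

/-- Finite-orbit viewfunctions. -/
def FiniteOrbit (F : Set ETrace) : Prop :=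
  Set.Finite {S : Set ETrace | ∃ t ∈ F, S = EOrbit t}

/-- The order `Σ ≤ Σ'` on sets of sets of O-views. -/
def OVleq (S1 S2 : Set (Set GTrace)) : Prop := ∀ F ∈ S1, ∃ F' ∈ S2, F' ⊆ F

/-- `C` reaches `C'` with labels `t`, where `C'` is not immediately preceded
by a proponent configuration (the last step is an opponent move), or `C' = C`
with `t` empty. -/
def ReachOP (C : GConf) (t : GTrace) (C' : GConf) : Prop :=
  (t = [] ∧ C' = C) ∨
    ∃ C₁ t₀ m, GMulti C t₀ C₁ ∧ GStep C₁ (.mv m) C' ∧ m.isP = false ∧ t = t₀ ++ [m]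

/-! Every visible transition appends its move to the trace and extends `A` and `κ` by exactly
the names the move introduces, while the name it calls must already be in `A` or `κ`. Hence
`dom A` and `dom κ` are the opponent and proponent names of the trace, and the freshness side
conditions of the rules make each move legal. For the bracketing, the stack `K` holds one entry
per unanswered proponent call: a trace reached from `C_e` is a prefix of `ret(D)[β̅]·CT_OP` in
which calls and returns nest like the pushes and pops of `K`, and a trace reached from `C_E` is
the role-swapped dual of such a prefix. -/

theorem CTOP.append {s u : GTrace} : CTOP s → CTOP u → CTOP (s ++ u)
  | .nil, hu => hu
  | .cons h₁ h₂, hu => by simpa using CTOP.cons h₁ (h₂.append hu)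

theorem CTPO.append {s u : GTrace} : CTPO s → CTPO u → CTPO (s ++ u)
  | .nil, hu => hu
  | .cons h₁ h₂, hu => by simpa using CTPO.cons h₁ (h₂.append hu)

def GMove.swap : GMove → GMove
  | .pcall a D bs => .ocall a D bs
  | .pret D bs => .oret D bs
  | .ocall b D as => .pcall b D as
  | .oret D as => .pret D as

@[simp]
theorem GMove.swap_swap (m : GMove) : m.swap.swap = m := by
  cases m <;> rfl

mutual
theorem CTOP.map_swap {t : GTrace} : CTOP t → CTPO (t.map GMove.swap)
  | .nil => .nil
  | .cons h₁ h₂ => by simpa [GMove.swap] using CTPO.cons h₁.map_swap h₂.map_swap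

theorem CTPO.map_swap {t : GTrace} : CTPO t → CTOP (t.map GMove.swap)
  | .nil => .nil
  | .cons h₁ h₂ => by simpa [GMove.swap] using CTOP.cons h₁.map_swap h₂.map_swap
end

theorem CompleteCT.map_swap {t : GTrace} (h : CompleteCT t) :
    CompleteCT (t.map GMove.swap) := by
  rcases h with ⟨D, bs, t', rfl, h⟩ | ⟨D, as, t', rfl, h⟩
  exacts [.inr ⟨D, bs, _, rfl, h.map_swap⟩, .inl ⟨D, as, _, rfl, h.map_swap⟩]

theorem IsGTrace.of_map_swap {t : GTrace} (h : IsGTrace (t.map GMove.swap)) : IsGTrace t := by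
  obtain ⟨w, hw, hc⟩ := h
  exact ⟨w.map GMove.swap, by simpa [Function.comp_def] using hw.map GMove.swap, hc.map_swap⟩

theorem IsGTrace.of_append {t u : GTrace} (h : IsGTrace (t ++ u)) : IsGTrace t :=
  let ⟨w, hw, hc⟩ := h
  ⟨w, (List.prefix_append t u).trans hw, hc⟩

/-- Prefixes of `CT_P` traces at which the opponent is to move; `p` counts the pending pairs of
an opponent call and a proponent call nested in it. -/
inductive OTurn : ℕ → GTrace → Prop
  | init {D bs s} (h : CTOP s) : OTurn 0 (.pret D bs :: s)
  | push {p t b D as s a D' bs' s'} (h : OTurn p t) (h₁ : CTPO s) (h₂ : CTOP s') :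
      OTurn (p + 1) (t ++ .ocall b D as :: s ++ .pcall a D' bs' :: s')

/-- Prefixes of `CT_P` traces at which the proponent is to move, with `p` as for `OTurn`. -/
inductive PTurn : ℕ → GTrace → Prop
  | nil : PTurn 0 []
  | ocall {p t b D as s} (h : OTurn p t) (h₁ : CTPO s) : PTurn p (t ++ .ocall b D as :: s)

section Turns

variable {p : ℕ} {t : GTrace}

theorem OTurn.append {u : GTrace} (h : OTurn p t) (hu : CTOP u) : OTurn p (t ++ u) := by
  cases h with
  | init h => simpa using OTurn.init (h.append hu)
  | push h h₁ h₂ => simpa using OTurn.push h h₁ (h₂.append hu)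

theorem OTurn.snoc_ocall {b D as} (h : OTurn p t) : PTurn p (t ++ [.ocall b D as]) :=
  PTurn.ocall h .nil

theorem OTurn.snoc_oret {D as} (h : OTurn (p + 1) t) : PTurn p (t ++ [.oret D as]) := by
  rcases h with _ | ⟨h, h₁, h₂⟩
  simpa using PTurn.ocall h (h₁.append (CTPO.cons h₂ .nil))

theorem PTurn.snoc_pret {D bs} (h : PTurn p t) : OTurn p (t ++ [.pret D bs]) := by
  cases h with
  | nil => exact OTurn.init .nil
  | ocall h h₁ => simpa using h.append (CTOP.cons h₁ .nil)

theorem PTurn.snoc_pcall {a D bs} (h : PTurn p t) (ht : t ≠ []) :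
    OTurn (p + 1) (t ++ [.pcall a D bs]) := by
  cases h with
  | nil => exact absurd rfl ht
  | ocall h h₁ => simpa using OTurn.push h h₁ .nil

theorem OTurn.exists_ctp (h : OTurn p t) : ∃ u, CTP (t ++ u) := by
  induction p generalizing t with
  | zero =>
    rcases h with ⟨h⟩
    exact ⟨[], _, _, _, List.append_nil _, h⟩
  | succ p ih =>
    obtain ⟨u, hu⟩ := ih (h.snoc_oret (D := .const .unit) (as := []) |>.snoc_pret
      (D := .const .unit) (bs := []))
    exact ⟨_ :: _ :: u, by simpa using hu⟩

theorem OTurn.isGTrace (h : OTurn p t) : IsGTrace t :=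
  let ⟨u, hu⟩ := h.exists_ctp
  ⟨t ++ u, List.prefix_append t u, .inl hu⟩

theorem PTurn.isGTrace (h : PTurn p t) : IsGTrace t :=
  (h.snoc_pret (D := .const .unit) (bs := [])).isGTrace.of_append

end Turns

@[simp]
theorem flat_eq_flatten {β : Type _} (l : List (List β)) : flat l = l.flatten := by
  induction l with
  | nil => rfl
  | cons l ls ih => simp [flat, ih]

@[simp]
theorem GTrace.ons_append (t u : GTrace) : GTrace.ons (t ++ u) = t.ons ++ u.ons := by
  simp [GTrace.ons]

@[simp]
theorem GTrace.pns_append (t u : GTrace) : GTrace.pns (t ++ u) = t.pns ++ u.pns := by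
  simp [GTrace.pns]

@[simp]
theorem GTrace.ons_singleton (m : GMove) : GTrace.ons [m] = m.ons := by
  simp [GTrace.ons]

@[simp]
theorem GTrace.pns_singleton (m : GMove) : GTrace.pns [m] = m.pns := by
  simp [GTrace.pns]

def LegalMove (t : GTrace) (m : GMove) : Prop :=
  m.intro.Nodup ∧
  match m with
  | .pcall a _ bs => (∀ b ∈ bs, b ∉ GTrace.pns t) ∧ ∃ m' ∈ t, a ∈ GMove.introO m'
  | .pret _ bs => ∀ b ∈ bs, b ∉ GTrace.pns t
  | .ocall b _ as => (∀ a ∈ as, a ∉ GTrace.ons t) ∧ ∃ m' ∈ t, b ∈ GMove.introP m'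
  | .oret _ as => ∀ a ∈ as, a ∉ GTrace.ons t

theorem LegalConds.nil : LegalConds [] := by
  intro t₁ m t₂ h
  simp at h

theorem LegalConds.snoc {t : GTrace} {m : GMove} (h : LegalConds t) (hm : LegalMove t m) :
    LegalConds (t ++ [m]) := by
  intro t₁ m' t₂ heq
  rcases List.eq_nil_or_concat t₂ with rfl | ⟨t₂, m'', rfl⟩
  · obtain ⟨rfl, hm'⟩ := List.append_inj' heq rfl
    cases hm'
    exact hm
  · rw [List.concat_eq_append, ← List.cons_append, ← List.append_assoc] at heq
    exact h t₁ m' t₂ (List.append_inj' heq rfl).1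

theorem LegalConds.exists_introO {t : GTrace} {a : ℕ} (h : LegalConds t) (ha : a ∈ t.ons) :
    ∃ m ∈ t, a ∈ m.introO := by
  simp only [GTrace.ons, flat_eq_flatten, List.mem_flatten, List.mem_map] at ha
  obtain ⟨_, ⟨m, hm, rfl⟩, ha⟩ := ha
  obtain ⟨t₁, t₂, rfl⟩ := List.append_of_mem hm
  have hleg := (h t₁ m t₂ rfl).2
  cases m <;> simp only [GMove.ons, List.mem_singleton, List.not_mem_nil] at ha
  case pcall =>
    subst ha
    obtain ⟨m', hm', ha⟩ := hleg.2
    exact ⟨m', List.mem_append_left _ hm', ha⟩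
  all_goals exact ⟨_, hm, by simpa [GMove.introO, GMove.isP, GMove.intro]⟩

theorem LegalConds.exists_introP {t : GTrace} {b : ℕ} (h : LegalConds t) (hb : b ∈ t.pns) :
    ∃ m ∈ t, b ∈ m.introP := by
  simp only [GTrace.pns, flat_eq_flatten, List.mem_flatten, List.mem_map] at hb
  obtain ⟨_, ⟨m, hm, rfl⟩, hb⟩ := hb
  obtain ⟨t₁, t₂, rfl⟩ := List.append_of_mem hm
  have hleg := (h t₁ m t₂ rfl).2
  cases m <;> simp only [GMove.pns, List.mem_singleton, List.not_mem_nil] at hb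
  case ocall =>
    subst hb
    obtain ⟨m', hm', hb⟩ := hleg.2
    exact ⟨m', List.mem_append_left _ hm', hb⟩
  all_goals exact ⟨_, hm, by simpa [GMove.introP, GMove.isP, GMove.intro]⟩

def NamesMatch (A : OMap) (κ : PMap) (t : GTrace) : Prop :=
  (∀ a, a ∈ t.ons ↔ (A a).isSome) ∧ ∀ b, b ∈ t.pns ↔ (κ b).isSome

theorem NamesMatch.snoc {A A' : OMap} {κ κ' : PMap} {t : GTrace} {m : GMove}
    (h : NamesMatch A κ t) (hA : ∀ a, (A' a).isSome ↔ (A a).isSome ∨ a ∈ m.ons)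
    (hκ : ∀ b, (κ' b).isSome ↔ (κ b).isSome ∨ b ∈ m.pns) :
    NamesMatch A' κ' (t ++ [m]) :=
  ⟨fun a => by simp [hA, h.1], fun b => by simp [hκ, h.2]⟩

theorem OMap.isSome_upd (A : OMap) (ns k : List ℕ) (a : ℕ) :
    (A.upd ns k a).isSome ↔ (A a).isSome ∨ a ∈ ns := by
  by_cases h : a ∈ ns <;> simp [OMap.upd, h]

theorem _root_.List.isSome_lookup_zip {α β : Type _} [BEq α] [LawfulBEq α] {ks : List α}
    {vs : List β} (hlen : ks.length = vs.length) (k : α) :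
    ((ks.zip vs).lookup k).isSome ↔ k ∈ ks := by
  induction ks generalizing vs with
  | nil => simp
  | cons x xs ih =>
    cases vs with
    | nil => simp at hlen
    | cons y ys =>
      by_cases hk : k = x
      · simp [hk]
      · have hk' : (k == x) = false := beq_false_of_ne hk
        simp [List.lookup, hk, hk', ih (vs := ys) (by simpa using hlen)]

theorem PMap.isSome_upd (κ : PMap) {bs : List ℕ} {vs : List Expr} (as : List ℕ)
    (hlen : bs.length = vs.length) (b : ℕ) :
    (κ.upd bs vs as b).isSome ↔ (κ b).isSome ∨ b ∈ bs := by
  rw [← List.isSome_lookup_zip hlen b, PMap.upd]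
  cases (bs.zip vs).lookup b <;> simp

def GConf.trace : GConf → GTrace
  | .prop _ _ _ t _ _ _ => t
  | .opp _ _ _ t _ _ => t

def GLab.moves : GLab → GTrace
  | .tau => []
  | .mv m => [m]

/-- The left disjuncts describe configurations reached from `C_e`, with `p = |K|`; the right
ones those reached from `C_E`, whose traces are duals of the former with `p = |V|`. -/
def GConf.TraceShape : GConf → Prop
  | .prop _ _ K t _ V _ =>
      PTurn K.length t ∨ (OTurn K.length (t.map GMove.swap) ∧ V.length = K.length)
  | .opp _ _ K t V _ =>
      OTurn K.length t ∨ ∃ q, K.length = q + 1 ∧ PTurn q (t.map GMove.swap) ∧ V.length = q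

theorem GConf.TraceShape.isGTrace {C : GConf} (h : C.TraceShape) : IsGTrace C.trace := by
  cases C with
  | prop => rcases h with h | ⟨h, -⟩; exacts [h.isGTrace, h.isGTrace.of_map_swap]
  | opp => rcases h with h | ⟨q, -, h, -⟩; exacts [h.isGTrace, h.isGTrace.of_map_swap]

def GConf.Inv (C : GConf) : Prop :=
  LegalConds C.trace ∧ NamesMatch C.Amap C.kmap C.trace ∧ C.TraceShape

section Steps

variable {C C' : GConf} {l : GLab}

theorem GStep.trace_eq (h : GStep C l C') : C'.trace = C.trace ++ l.moves := by
  cases h <;> simp [GConf.trace, GLab.moves]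

theorem GStep.namesMatch (h : GStep C l C') (hN : NamesMatch C.Amap C.kmap C.trace) :
    NamesMatch C'.Amap C'.kmap C'.trace := by
  cases h with
  | propTau => exact hN
  | propRet _ _ hlen =>
    exact hN.snoc (by simp [GConf.Amap, GMove.ons])
      (by simp [GConf.kmap, PMap.isSome_upd _ _ hlen, GMove.pns])
  | propApp _ _ _ _ hA hlen =>
    exact hN.snoc (by simp [GConf.Amap, GMove.ons, hA])
      (by simp [GConf.kmap, PMap.isSome_upd _ _ hlen, GMove.pns])
  | opRet =>
    exact hN.snoc (by simp [GConf.Amap, OMap.isSome_upd, GMove.ons])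
      (by simp [GConf.kmap, GMove.pns])
  | opApp _ _ hκ =>
    exact hN.snoc (by simp [GConf.Amap, OMap.isSome_upd, GMove.ons])
      (by simp [GConf.kmap, GMove.pns, hκ])

theorem GStep.legalConds (h : GStep C l C') (hN : NamesMatch C.Amap C.kmap C.trace)
    (hL : LegalConds C.trace) : LegalConds C'.trace := by
  cases h with
  | propTau => exact hL
  | propRet _ _ _ hnodup hfresh =>
    exact hL.snoc ⟨hnodup, fun b hb hmem => by
      simpa [GConf.kmap, hfresh b hb] using (hN.2 b).1 hmem⟩
  | propApp _ _ _ _ ha _ hnodup hfresh =>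
    exact hL.snoc ⟨hnodup, fun b hb hmem => by
      simpa [GConf.kmap, hfresh b hb] using (hN.2 b).1 hmem,
      hL.exists_introO ((hN.1 _).2 (by simp [GConf.Amap, ha]))⟩
  | opRet _ hU _ hfresh =>
    exact hL.snoc ⟨hU.2.2, fun a ha hmem => by
      simpa [GConf.Amap, hfresh a ha] using (hN.1 a).1 hmem⟩
  | opApp _ _ hb _ hU hfresh =>
    exact hL.snoc ⟨hU.2.2, fun a ha hmem => by
      simpa [GConf.Amap, hfresh a ha] using (hN.1 a).1 hmem,
      hL.exists_introP ((hN.2 _).2 (by simp [GConf.kmap, hb]))⟩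

theorem GStep.traceShape (h : GStep C l C') (hN : NamesMatch C.Amap C.kmap C.trace)
    (hS : C.TraceShape) : C'.TraceShape := by
  cases h with
  | propTau => exact hS
  | @propRet A κ K t v V =>
    rcases hS with hS | ⟨hS, hV⟩
    · exact .inl hS.snoc_pret
    · have hK : K.length = V.length + 1 := by simpa using hV.symm
      rw [hK] at hS
      exact .inr ⟨V.length, hK, by simpa [GMove.swap] using hS.snoc_oret, rfl⟩
  | @propApp A κ K t E a _ _ _ _ _ _ _ _ _ _ _ _ _ ha =>
    rcases hS with hS | ⟨hS, hV⟩
    · have ht : t ≠ [] := by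
        rintro rfl
        simpa [GConf.trace, GTrace.ons, GConf.Amap, ha] using (hN.1 a).2
      exact .inl (by simpa using hS.snoc_pcall ht)
    · exact .inr ⟨K.length, rfl, by simpa [GMove.swap] using hS.snoc_ocall, hV⟩
  | opRet =>
    rcases hS with hS | ⟨q, hq, hS, hV⟩
    · exact .inl hS.snoc_oret
    · obtain rfl := Nat.succ_inj.mp hq
      exact .inr ⟨by simpa [GMove.swap] using hS.snoc_pret, hV⟩
  | @opApp A κ K t V bs b _ _ _ _ _ _ _ _ hb =>
    rcases hS with hS | ⟨q, hq, hS, hV⟩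
    · exact .inl hS.snoc_ocall
    · have ht : t ≠ [] := by
        rintro rfl
        simpa [GConf.trace, GTrace.pns, GConf.kmap, hb] using (hN.2 b).2
      exact .inr ⟨by simpa [GMove.swap, hq] using hS.snoc_pcall (by simpa using ht),
        by simp [hV, hq]⟩

theorem GStep.inv (h : GStep C l C') (hC : C.Inv) : C'.Inv :=
  ⟨h.legalConds hC.2.1 hC.1, h.namesMatch hC.2.1, h.traceShape hC.2.1 hC.2.2⟩

end Steps

theorem GConf.IsInitial.inv {C : GConf} (h : C.IsInitial) : C.Inv ∧ C.trace = [] := by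
  have hN : NamesMatch OMap.empty PMap.empty [] := by
    simp [NamesMatch, OMap.empty, PMap.empty, GTrace.ons, GTrace.pns]
  rcases h with ⟨e, rfl⟩ | ⟨E, rfl⟩
  · exact ⟨⟨.nil, hN, .inl .nil⟩, rfl⟩
  · exact ⟨⟨.nil, hN, .inr ⟨0, rfl, .nil, rfl⟩⟩, rfl⟩

theorem GMulti.inv {C C' : GConf} {t : GTrace} (h : GMulti C t C') (hC : C.Inv) :
    C'.Inv ∧ C'.trace = C.trace ++ t := by
  induction h with
  | refl => simp [hC]
  | tau h _ ih => simpa [h.trace_eq, GLab.moves] using ih (h.inv hC)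
  | mv h _ ih => simpa [h.trace_eq, GLab.moves] using ih (h.inv hC)

theorem traces_legal_names (C : GConf) (t : GTrace) (C' : GConf)
    (hI : C.IsInitial) (h : GMulti C t C') :
    GLegal t ∧
      (∀ a, a ∈ GTrace.ons t ↔ (C'.Amap a).isSome = true) ∧
      (∀ b, b ∈ GTrace.pns t ↔ (C'.kmap b).isSome = true) := by
  obtain ⟨hC, hC₀⟩ := hI.inv
  obtain ⟨⟨hL, hN, hS⟩, ht⟩ := h.inv hC
  rw [hC₀, List.nil_append] at ht
  subst ht
  exact ⟨⟨hS.isGTrace, hL⟩, hN⟩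

end PCFv
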